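/- arXiv:2512.00632 — 2 statements merged into one kernel-verified Lean document; each statement's English description precedes it below -/
import Mathlib

section
/- Let $X_1, \ldots, X_n$ be independent Bernoulli random variables with $\Pr[X_i = 1] = p_i$, let $S = \sum_{i=1}^n X_i$ and $\lambda = \sum_{i=1}^n p_i$. Then the total variation distance between the law of $S$ and the Poisson distribution with mean $\lambda$ is at most $\sum_{i=1}^n p_i^2$. -/
/-!
The law of a sum of independent `ℕ`-valued variables is the discrete convolution of their mass
functions, and Poisson laws convolve to Poisson laws: `Po(a) ∗ Po(b) = Po(a + b)`. Since
convolving with a probability vector does not increase `ℓ¹` distances, the `ℓ¹` distance between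
the law of `S` and `Po(λ)` is at most the sum of the distances between `Ber(pᵢ)` and `Po(pᵢ)`,
each of which equals `2 pᵢ (1 - exp (-pᵢ)) ≤ 2 pᵢ²`. The total variation distance between two
probability vectors is half their `ℓ¹` distance.
-/

open MeasureTheory Real ProbabilityTheory

namespace LeCam

open Finset

noncomputable def conv (f g : ℕ → ℝ) (n : ℕ) : ℝ := ∑ kl ∈ antidiagonal n, f kl.1 * g kl.2

section Convolution

variable {f g f' g' : ℕ → ℝ}

lemma abs_conv_le (f g : ℕ → ℝ) (n : ℕ) : |conv f g n| ≤ conv (|f ·|) (|g ·|) n :=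
  (abs_sum_le_sum_abs _ _).trans_eq (by simp only [conv, abs_mul])

lemma summable_abs_conv (hf : Summable (|f ·|)) (hg : Summable (|g ·|)) :
    Summable (|conv f g ·|) := by
  have := summable_norm_sum_mul_antidiagonal_of_summable_norm (R := ℝ) (f := f) (g := g)
    (by simpa only [Real.norm_eq_abs] using hf) (by simpa only [Real.norm_eq_abs] using hg)
  simpa only [Real.norm_eq_abs, conv] using this

lemma tsum_abs_conv_le (hf : Summable (|f ·|)) (hg : Summable (|g ·|)) :
    ∑' n, |conv f g n| ≤ (∑' n, |f n|) * ∑' n, |g n| := by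
  have hf' : Summable fun n => ‖|f n|‖ := by simpa only [Real.norm_eq_abs, abs_abs] using hf
  have hg' : Summable fun n => ‖|g n|‖ := by simpa only [Real.norm_eq_abs, abs_abs] using hg
  have hprod : (∑' n, |f n|) * ∑' n, |g n| = ∑' n, conv (|f ·|) (|g ·|) n :=
    tsum_mul_tsum_eq_tsum_sum_antidiagonal_of_summable_norm hf' hg'
  have hsum : Summable (conv (|f ·|) (|g ·|)) :=
    summable_sum_mul_antidiagonal_of_summable_norm' (f := (|f ·|)) (g := (|g ·|)) hf' hf hg' hg
  rw [hprod]
  exact (summable_abs_conv hf hg).tsum_le_tsum (abs_conv_le f g) hsum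

lemma conv_sub_conv (f g f' g' : ℕ → ℝ) (n : ℕ) :
    conv f g n - conv f' g' n = conv (f - f') g n + conv f' (g - g') n := by
  simp only [conv, ← sum_sub_distrib, ← sum_add_distrib, Pi.sub_apply]
  exact sum_congr rfl fun _ _ => by ring

lemma tsum_abs_conv_sub_conv_le (hff' : Summable fun n => |f n - f' n|) (hg : Summable (|g ·|))
    (hf' : Summable (|f' ·|)) (hgg' : Summable fun n => |g n - g' n|) :
    ∑' n, |conv f g n - conv f' g' n| ≤
      (∑' n, |f n - f' n|) * (∑' n, |g n|) + (∑' n, |f' n|) * ∑' n, |g n - g' n| := by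
  have h₁ := summable_abs_conv hff' hg
  have h₂ := summable_abs_conv hf' hgg'
  have hle (n : ℕ) :
      |conv f g n - conv f' g' n| ≤ |conv (f - f') g n| + |conv f' (g - g') n| := by
    rw [conv_sub_conv]
    exact abs_add_le _ _
  calc ∑' n, |conv f g n - conv f' g' n|
      ≤ ∑' n, (|conv (f - f') g n| + |conv f' (g - g') n|) :=
        ((h₁.add h₂).of_nonneg_of_le (fun _ => abs_nonneg _) hle).tsum_le_tsum hle (h₁.add h₂)
    _ = ∑' n, |conv (f - f') g n| + ∑' n, |conv f' (g - g') n| := h₁.tsum_add h₂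
    _ ≤ _ := add_le_add (tsum_abs_conv_le hff' hg) (tsum_abs_conv_le hf' hgg')

end Convolution

open Nat in
noncomputable def poissonMass (a : ℝ) (n : ℕ) : ℝ := exp (-a) * a ^ n / n !

noncomputable def bernoulliMass (q : ℝ) : ℕ → ℝ
  | 0 => 1 - q
  | 1 => q
  | _ + 2 => 0

lemma poissonMass_nonneg {a : ℝ} (ha : 0 ≤ a) (n : ℕ) : 0 ≤ poissonMass a n := by
  unfold poissonMass
  positivity

open Nat in
lemma hasSum_poissonMass (a : ℝ) : HasSum (poissonMass a) 1 := by
  have := (NormedSpace.expSeries_div_hasSum_exp a).mul_left (exp (-a))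
  rw [← Real.exp_eq_exp_ℝ, ← Real.exp_add, neg_add_cancel, Real.exp_zero] at this
  show HasSum (fun n => exp (-a) * a ^ n / n !) 1
  simpa only [mul_div_assoc] using this

open Nat in
lemma conv_poissonMass (a b : ℝ) :
    conv (poissonMass a) (poissonMass b) = poissonMass (a + b) := by
  ext n
  simp only [conv, poissonMass, (Commute.all a b).add_pow', neg_add, Real.exp_add, sum_div,
    mul_sum]
  refine sum_congr rfl fun ⟨i, j⟩ hij => ?_
  rw [HasAntidiagonal.mem_antidiagonal] at hij
  subst hij
  have hc : ((i + j).choose j : ℝ) ≠ 0 := by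
    exact_mod_cast (Nat.choose_pos (Nat.le_add_left j i)).ne'
  rw [nsmul_eq_mul, Nat.choose_symm_add, ← Nat.add_choose_mul_factorial_mul_factorial i j]
  push_cast
  field_simp

lemma hasSum_abs_bernoulliMass_sub_poissonMass {q : ℝ} (hq : 0 ≤ q) :
    HasSum (fun n => |bernoulliMass q n - poissonMass q n|) (2 * q * (1 - exp (-q))) := by
  have htail := (hasSum_nat_add_iff' 2).mpr (hasSum_poissonMass q)
  rw [← hasSum_nat_add_iff' 2]
  have h₀ : 1 - q ≤ exp (-q) := by linarith [add_one_le_exp (-q)]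
  have h₁ : exp (-q) ≤ 1 := exp_le_one_iff.mpr (neg_nonpos.mpr hq)
  convert htail using 1
  · ext n
    simp [bernoulliMass, abs_of_nonneg (poissonMass_nonneg hq _)]
  · have h₂ : 0 ≤ q - exp (-q) * q := by nlinarith
    simp only [bernoulliMass, poissonMass, sum_range_succ, range_one, sum_singleton, pow_zero,
      pow_one, mul_one, Nat.factorial_zero, Nat.factorial_one, Nat.cast_one, div_one,
      abs_of_nonpos (sub_nonpos.mpr h₀), neg_sub, abs_of_nonneg h₂]
    ring

lemma tsum_abs_bernoulliMass_sub_poissonMass_le {q : ℝ} (hq : 0 ≤ q) :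
    ∑' n, |bernoulliMass q n - poissonMass q n| ≤ 2 * q ^ 2 := by
  rw [(hasSum_abs_bernoulliMass_sub_poissonMass hq).tsum_eq]
  nlinarith [add_one_le_exp (-q)]

section Law

variable {Ω : Type*} [MeasurableSpace Ω] {P : Measure Ω}

lemma hasSum_measureReal_preimage_singleton [IsFiniteMeasure P] {T : Ω → ℕ} (hT : Measurable T) :
    HasSum (fun n => P.real (T ⁻¹' {n})) (P.real Set.univ) := by
  have h : ∑' n, P (T ⁻¹' {n}) = P Set.univ := by
    rw [← measure_iUnion (fun i j hij => (Set.disjoint_singleton.mpr hij).preimage T)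
      fun n => hT (measurableSet_singleton n), ← Set.preimage_iUnion, Set.iUnion_of_singleton,
      Set.preimage_univ]
  have := ENNReal.hasSum_toReal (h ▸ measure_ne_top P Set.univ)
  rwa [← ENNReal.tsum_toReal_eq fun _ => measure_ne_top P _, h] at this

lemma measureReal_preimage_eq_tsum [IsFiniteMeasure P] {T : Ω → ℕ} (hT : Measurable T)
    (A : Set ℕ) :
    P.real (T ⁻¹' A) = ∑' n : A, P.real (T ⁻¹' {(n : ℕ)}) := by
  rw [measureReal_def, ← tsum_measure_preimage_singleton A.to_countable
    fun n _ => hT (measurableSet_singleton n), ENNReal.tsum_toReal_eq fun _ => measure_ne_top _ _]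
  rfl

lemma measureReal_add_preimage_singleton [IsFiniteMeasure P] {Y T : Ω → ℕ} (hY : Measurable Y)
    (hT : Measurable T) (hYT : Y ⟂ᵢ[P] T) (n : ℕ) :
    P.real ((fun ω => Y ω + T ω) ⁻¹' {n}) =
      conv (fun k => P.real (Y ⁻¹' {k})) (fun k => P.real (T ⁻¹' {k})) n := by
  have hfib : (fun ω => Y ω + T ω) ⁻¹' {n} =
      ⋃ kl ∈ antidiagonal n, Y ⁻¹' {kl.1} ∩ T ⁻¹' {kl.2} := by
    ext ω
    simp
  rw [hfib, measureReal_biUnion_finset]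
  · refine sum_congr rfl fun kl _ => ?_
    simp only [measureReal_def, hYT.measure_inter_preimage_eq_mul _ _ (measurableSet_singleton _)
      (measurableSet_singleton _), ENNReal.toReal_mul]
  · intro kl _ kl' _ hne
    exact Set.disjoint_left.mpr fun ω h h' =>
      hne (Prod.ext (h.1.symm.trans h'.1) (h.2.symm.trans h'.2))
  · exact fun kl _ => (hY (measurableSet_singleton _)).inter (hT (measurableSet_singleton _))

lemma measureReal_preimage_singleton_eq_bernoulliMass [IsProbabilityMeasure P] {Y : Ω → ℕ}
    (hY : Measurable Y) (hY1 : ∀ ω, Y ω ≤ 1) {q : ℝ} (hq : 0 ≤ q)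
    (hlaw : P {ω | Y ω = 1} = ENNReal.ofReal q) (n : ℕ) :
    P.real (Y ⁻¹' {n}) = bernoulliMass q n := by
  have h₁ : P.real (Y ⁻¹' {1}) = q :=
    (congrArg ENNReal.toReal hlaw).trans (ENNReal.toReal_ofReal hq)
  match n with
  | 0 =>
    have : Y ⁻¹' {0} = (Y ⁻¹' {1})ᶜ := by
      ext ω
      have := hY1 ω
      simp only [Set.mem_preimage, Set.mem_singleton_iff, Set.mem_compl_iff]
      omega
    rw [this, probReal_compl_eq_one_sub (hY (measurableSet_singleton 1)), h₁, bernoulliMass]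
  | 1 => rw [h₁, bernoulliMass]
  | k + 2 =>
    have : Y ⁻¹' {k + 2} = ∅ := by
      ext ω
      have := hY1 ω
      simp only [Set.mem_preimage, Set.mem_singleton_iff, Set.mem_empty_iff_false, iff_false]
      omega
    rw [this, measureReal_empty, bernoulliMass]

end Law

lemma abs_tsum_subtype_le_half_tsum_abs {α : Type*} {d : α → ℝ} (hd : HasSum d 0) (A : Set α) :
    |∑' a : A, d a| ≤ (∑' a, |d a|) / 2 := by
  have habs : Summable fun a => ‖d a‖ := hd.summable.norm
  have hA : ‖∑' a : A, d a‖ ≤ ∑' a : A, ‖d a‖ := norm_tsum_le_tsum_norm (habs.subtype A)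
  have hAc : ‖∑' a : ↥Aᶜ, d a‖ ≤ ∑' a : ↥Aᶜ, ‖d a‖ := norm_tsum_le_tsum_norm (habs.subtype Aᶜ)
  have hsplit := (hd.summable.subtype A).tsum_add_tsum_compl (hd.summable.subtype Aᶜ)
  have habs_split := (habs.subtype A).tsum_add_tsum_compl (habs.subtype Aᶜ)
  rw [hd.tsum_eq, add_eq_zero_iff_eq_neg] at hsplit
  simp only [Real.norm_eq_abs] at hA hAc habs_split
  rw [hsplit, abs_neg] at hA ⊢
  linarith

section Sum

variable {Ω ι : Type*} [MeasurableSpace Ω] {P : Measure Ω} [IsProbabilityMeasure P]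

lemma tsum_abs_measureReal_sum_sub_poissonMass_le {X : ι → Ω → ℕ}
    (hmeas : ∀ i, Measurable (X i)) (hindep : iIndepFun X P) {p : ι → ℝ} (hp : ∀ i, 0 ≤ p i)
    (hBer : ∀ i ω, X i ω ≤ 1) (hlaw : ∀ i, P {ω | X i ω = 1} = ENNReal.ofReal (p i))
    (s : Finset ι) :
    ∑' n, |P.real ((fun ω => ∑ i ∈ s, X i ω) ⁻¹' {n}) - poissonMass (∑ i ∈ s, p i) n| ≤
      ∑ i ∈ s, 2 * p i ^ 2 := by
  induction s using Finset.cons_induction with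
  | empty =>
    have h (n : ℕ) : P.real ((fun _ => 0) ⁻¹' {n}) = poissonMass 0 n := by
      cases n <;> simp [poissonMass, Set.preimage]
    simp [h]
  | cons a s ha ih =>
    set F : ℕ → ℝ := fun n => P.real ((fun ω => ∑ i ∈ s, X i ω) ⁻¹' {n})
    have hS : Measurable fun ω => ∑ i ∈ s, X i ω := Finset.measurable_sum s fun i _ => hmeas i
    have hF : HasSum F 1 := by
      simpa using hasSum_measureReal_preimage_singleton (P := P) hS
    have hXa : (fun n => P.real (X a ⁻¹' {n})) = bernoulliMass (p a) :=
      funext (measureReal_preimage_singleton_eq_bernoulliMass (hmeas a) (hBer a) (hp a) (hlaw a))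
    have hindep_a : X a ⟂ᵢ[P] fun ω => ∑ i ∈ s, X i ω := by
      simpa only [Finset.sum_fn] using (hindep.indepFun_finsetSum_of_notMem hmeas ha).symm
    have hlaw_cons (n : ℕ) : P.real ((fun ω => ∑ i ∈ cons a s ha, X i ω) ⁻¹' {n}) =
        conv (bernoulliMass (p a)) F n := by
      simp only [sum_cons]
      rw [measureReal_add_preimage_singleton (hmeas a) hS hindep_a, hXa]
    have hF_abs : ∑' n, |F n| = 1 := by
      simpa only [F, abs_of_nonneg measureReal_nonneg] using hF.tsum_eq
    have hpoi_abs : ∑' n, |poissonMass (p a) n| = 1 := by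
      simpa only [abs_of_nonneg (poissonMass_nonneg (hp a) _)] using (hasSum_poissonMass _).tsum_eq
    have hber := hasSum_abs_bernoulliMass_sub_poissonMass (hp a)
    simp only [hlaw_cons]
    rw [sum_cons, sum_cons, ← conv_poissonMass]
    calc _ ≤ (∑' n, |bernoulliMass (p a) n - poissonMass (p a) n|) * (∑' n, |F n|) +
          (∑' n, |poissonMass (p a) n|) * ∑' n, |F n - poissonMass (∑ i ∈ s, p i) n| :=
          tsum_abs_conv_sub_conv_le hber.summable hF.summable.abs
            (hasSum_poissonMass _).summable.abs
            (hF.summable.sub (hasSum_poissonMass _).summable).abs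
      _ ≤ 2 * p a ^ 2 + ∑ i ∈ s, 2 * p i ^ 2 := by
          rw [hF_abs, hpoi_abs, mul_one, one_mul]
          exact add_le_add (tsum_abs_bernoulliMass_sub_poissonMass_le (hp a)) ih

end Sum

end LeCam

open LeCam

theorem stmt4_general {Ω : Type*} [MeasurableSpace Ω] (P : Measure Ω) [IsProbabilityMeasure P]
    (n : ℕ) (X : Fin n → Ω → ℕ) (hmeas : ∀ i, Measurable (X i))
    (hindep : iIndepFun X P)
    (p : Fin n → ℝ) (hp : ∀ i, 0 ≤ p i)
    (hBer : ∀ i ω, X i ω ≤ 1)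
    (hlaw : ∀ i, P {ω | X i ω = 1} = ENNReal.ofReal (p i)) :
    ∀ A : Set ℕ,
      |(P {ω | (∑ i, X i ω) ∈ A}).toReal -
        ∑' k : A, Real.exp (-(∑ i, p i)) * (∑ i, p i) ^ (k : ℕ) / Nat.factorial (k : ℕ)| ≤
      ∑ i, p i ^ 2 := by
  intro A
  set S : Ω → ℕ := fun ω => ∑ i, X i ω
  have hS : Measurable S := Finset.measurable_sum _ fun i _ => hmeas i
  have hd : HasSum (fun k => P.real (S ⁻¹' {k}) - poissonMass (∑ i, p i) k) 0 := by
    simpa using (hasSum_measureReal_preimage_singleton (P := P) hS).sub (hasSum_poissonMass _)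
  have hL1 := tsum_abs_measureReal_sum_sub_poissonMass_le hmeas hindep hp hBer hlaw Finset.univ
  calc _ = |P.real (S ⁻¹' A) - ∑' k : A, poissonMass (∑ i, p i) k| := rfl
    _ = |∑' k : A, (P.real (S ⁻¹' {(k : ℕ)}) - poissonMass (∑ i, p i) k)| := by
        rw [measureReal_preimage_eq_tsum hS]
        exact congrArg abs (Summable.tsum_sub
          ((hasSum_measureReal_preimage_singleton hS).summable.subtype A)
          ((hasSum_poissonMass _).summable.subtype A)).symm
    _ ≤ (∑' k, |P.real (S ⁻¹' {k}) - poissonMass (∑ i, p i) k|) / 2 :=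
        abs_tsum_subtype_le_half_tsum_abs hd A
    _ ≤ ∑ i, p i ^ 2 := by
        rw [← Finset.mul_sum] at hL1
        linarith

/-- Le Cam's theorem: For independent Bernoulli random variables `X i` with
`Pr[X i = 1] = p i`, `S = ∑ X i` and `λ = ∑ p i`, the total variation distance between the
law of `S` and the Poisson distribution with mean `λ` is at most `∑ p i ^ 2`. -/
theorem stmt4 {Ω : Type*} [MeasurableSpace Ω] (P : Measure Ω) [IsProbabilityMeasure P]
    (n : ℕ) (X : Fin n → Ω → ℕ) (hmeas : ∀ i, Measurable (X i))
    (hindep : iIndepFun X P)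
    (p : Fin n → ℝ) (hp : ∀ i, 0 ≤ p i) (hp1 : ∀ i, p i ≤ 1)
    (hBer : ∀ i ω, X i ω ≤ 1)
    (hlaw : ∀ i, P {ω | X i ω = 1} = ENNReal.ofReal (p i)) :
    ∀ A : Set ℕ,
      |(P {ω | (∑ i, X i ω) ∈ A}).toReal -
        ∑' k : A, Real.exp (-(∑ i, p i)) * (∑ i, p i) ^ (k : ℕ) / Nat.factorial (k : ℕ)| ≤
      ∑ i, p i ^ 2 :=
  stmt4_general P n X hmeas hindep p hp hBer hlaw
end

section
/- Let $E_1$ and $E_2$ be independent standard exponential random variables and let $F > 0$. Define $Z_1 = F \cdot E_1^{-1/p}$ and $Z_2 = F \cdot (E_1 + E_2)^{-1/p}$ for fixed $p > 0$. Then there exist constants $0 < a < b$ (depending on $p$) such that with probability at least $7/8$, simultaneously $aF \le Z_2 \le Z_1 \le bF$ and $Z_1 - Z_2 \ge aF$. -/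
/-!
Since `t ↦ t ^ (-1/p)` is decreasing on `(0, ∞)`, all four inequalities hold
deterministically once `E₁, E₂ ∈ [1/32, 4]`: then `E₁ + E₂ ≥ (129/128) E₁`, which separates
`E₁ ^ (-1/p)` from `(E₁ + E₂) ^ (-1/p)` by a fixed factor. A union bound over the four tail events
`Eᵢ < 1/32` and `Eᵢ > 4`, each of probability at most `1/32`, shows that this happens with
probability at least `7/8`.
-/

open MeasureTheory Real ProbabilityTheory Set

/-- The lower bound `a` of the theorem, for exponent `q = -1/p` and good window `[ε, M]`. -/
noncomputable def rpowGapConst (q ε M : ℝ) : ℝ :=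
  min ((2 * M) ^ q) (M ^ q * (1 - (1 + ε / M) ^ q))

section Deterministic

variable {q ε M x y : ℝ}

theorem rpow_gap_le_rpow_sub_rpow_add (hq : q ≤ 0) (hε : 0 ≤ ε) (hx : 0 < x) (hxM : x ≤ M)
    (hy : ε ≤ y) : M ^ q * (1 - (1 + ε / M) ^ q) ≤ x ^ q - (x + y) ^ q := by
  have hM : 0 < M := hx.trans_le hxM
  have hfactor : 0 ≤ 1 - (1 + ε / M) ^ q :=
    sub_nonneg.2 (rpow_le_one_of_one_le_of_nonpos (by simp; positivity) hq)
  have hsum : x * (1 + ε / M) ≤ x + y := by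
    have : x * (ε / M) ≤ ε := by
      rw [mul_div_assoc', div_le_iff₀ hM]; exact mul_comm ε M ▸ mul_le_mul_of_nonneg_right hxM hε
    linarith
  have hsum_rpow : (x + y) ^ q ≤ x ^ q * (1 + ε / M) ^ q := by
    rw [← mul_rpow hx.le (by positivity)]
    exact rpow_le_rpow_of_nonpos (by positivity) hsum hq
  calc M ^ q * (1 - (1 + ε / M) ^ q) ≤ x ^ q * (1 - (1 + ε / M) ^ q) :=
        mul_le_mul_of_nonneg_right (rpow_le_rpow_of_nonpos hx hxM hq) hfactor
    _ ≤ x ^ q - (x + y) ^ q := by linarith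

theorem rpowGapConst_pos (hq : q < 0) (hε : 0 < ε) (hM : 0 < M) : 0 < rpowGapConst q ε M := by
  have : (1 + ε / M) ^ q < 1 := rpow_lt_one_of_one_lt_of_neg (by simp; positivity) hq
  exact lt_min (by positivity) (mul_pos (by positivity) (by linarith))

theorem rpowGapConst_lt (hq : q < 0) (hε : 0 < ε) (hεM : ε < 2 * M) :
    rpowGapConst q ε M < ε ^ q :=
  (min_le_left _ _).trans_lt (rpow_lt_rpow_of_neg hε hεM hq)

theorem rpowGapConst_bounds_of_mem_Icc (hq : q ≤ 0) (hε : 0 < ε) (hx : x ∈ Icc ε M)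
    (hy : y ∈ Icc ε M) {F : ℝ} (hF : 0 ≤ F) :
    rpowGapConst q ε M * F ≤ F * (x + y) ^ q ∧ F * (x + y) ^ q ≤ F * x ^ q ∧
      F * x ^ q ≤ ε ^ q * F ∧ rpowGapConst q ε M * F ≤ F * x ^ q - F * (x + y) ^ q := by
  obtain ⟨hεx, hxM⟩ := hx
  obtain ⟨hεy, hyM⟩ := hy
  have hx0 : 0 < x := hε.trans_le hεx
  have hsum : (2 * M) ^ q ≤ (x + y) ^ q :=
    rpow_le_rpow_of_nonpos (by linarith) (by linarith) hq
  have hgap := rpow_gap_le_rpow_sub_rpow_add hq hε.le hx0 hxM hεy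
  refine ⟨?_, ?_, ?_, ?_⟩
  · rw [mul_comm F]
    exact mul_le_mul_of_nonneg_right ((min_le_left _ _).trans hsum) hF
  · exact mul_le_mul_of_nonneg_left (rpow_le_rpow_of_nonpos hx0 (by linarith) hq) hF
  · rw [mul_comm F]
    exact mul_le_mul_of_nonneg_right (rpow_le_rpow_of_nonpos hε hεx hq) hF
  · rw [← mul_sub, mul_comm F]
    exact mul_le_mul_of_nonneg_right ((min_le_right _ _).trans hgap) hF

end Deterministic

section ExponentialTails

variable {Ω : Type*} [MeasurableSpace Ω] {P : Measure Ω} [IsProbabilityMeasure P] {E : Ω → ℝ}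

theorem measureReal_not_mem_Icc_le_of_exp_tail (hE : Measurable E)
    (htail : ∀ t : ℝ, 0 ≤ t → P {ω | t < E ω} = ENNReal.ofReal (exp (-t)))
    {ε M : ℝ} (hε : 0 ≤ ε) (hM : 0 ≤ M) :
    P.real {ω | E ω ∉ Icc ε M} ≤ ε + exp (-M) := by
  have htail_real : ∀ t, 0 ≤ t → P.real {ω | t < E ω} = exp (-t) := fun t ht => by
    rw [measureReal_def, htail t ht, ENNReal.toReal_ofReal (exp_pos _).le]
  have hsub : {ω | E ω ∉ Icc ε M} ⊆ {ω | ε < E ω}ᶜ ∪ {ω | M < E ω} := by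
    intro ω hω
    simp only [mem_ofPred_eq, mem_Icc, not_and_or, not_le] at hω
    simp only [mem_union, mem_compl_iff, mem_ofPred_eq]
    rcases hω with h | h
    · exact Or.inl h.not_gt
    · exact Or.inr h
  have hlow : P.real {ω | ε < E ω}ᶜ ≤ ε := by
    rw [probReal_compl_eq_one_sub (measurableSet_lt measurable_const hE), htail_real ε hε]
    linarith [add_one_le_exp (-ε)]
  calc P.real {ω | E ω ∉ Icc ε M}
      ≤ P.real {ω | ε < E ω}ᶜ + P.real {ω | M < E ω} :=
        (measureReal_mono hsub).trans (measureReal_union_le _ _)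
    _ ≤ ε + exp (-M) := by rw [htail_real M hM]; linarith

end ExponentialTails

theorem exp_neg_four_lt : exp (-4) < 1 / 32 := by
  have he : (27 / 10 : ℝ) ^ 4 < exp 1 ^ 4 :=
    pow_lt_pow_left₀ (by linarith [exp_one_gt_d9]) (by norm_num) (by norm_num)
  rw [← exp_nat_mul] at he
  rw [exp_neg, inv_lt_comm₀ (exp_pos _) (by norm_num)]
  norm_num at he ⊢
  linarith

/-- For independent standard exponentials `E₁, E₂`, `F > 0`, `p > 0`,
`Z₁ = F ⬝ E₁^{-1/p}` and `Z₂ = F ⬝ (E₁ + E₂)^{-1/p}`, there are constants `0 < a < b`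
(depending only on `p`) such that with probability at least `7/8`, simultaneously
`a F ≤ Z₂ ≤ Z₁ ≤ b F` and `Z₁ - Z₂ ≥ a F`. -/
theorem stmt18 (p : ℝ) (hp : 0 < p) :
    ∃ a b : ℝ, 0 < a ∧ a < b ∧
      ∀ (Ω : Type) (_ : MeasurableSpace Ω) (P : Measure Ω), IsProbabilityMeasure P →
      ∀ (E₁ E₂ : Ω → ℝ), Measurable E₁ → Measurable E₂ → IndepFun E₁ E₂ P →
        (∀ t : ℝ, 0 ≤ t → P {ω | t < E₁ ω} = ENNReal.ofReal (Real.exp (-t))) →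
        (∀ t : ℝ, 0 ≤ t → P {ω | t < E₂ ω} = ENNReal.ofReal (Real.exp (-t))) →
        ∀ F : ℝ, 0 < F →
          (7 : ℝ) / 8 ≤
            (P {ω |
              a * F ≤ F * (E₁ ω + E₂ ω) ^ (-(1 / p)) ∧
              F * (E₁ ω + E₂ ω) ^ (-(1 / p)) ≤ F * (E₁ ω) ^ (-(1 / p)) ∧
              F * (E₁ ω) ^ (-(1 / p)) ≤ b * F ∧
              a * F ≤ F * (E₁ ω) ^ (-(1 / p)) - F * (E₁ ω + E₂ ω) ^ (-(1 / p))}).toReal := by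
  have hq : -(1 / p) < 0 := by simpa using hp
  refine ⟨rpowGapConst (-(1 / p)) (1 / 32) 4, (1 / 32) ^ (-(1 / p)),
    rpowGapConst_pos hq (by norm_num) (by norm_num),
    rpowGapConst_lt hq (by norm_num) (by norm_num), ?_⟩
  intro Ω _ P _ E₁ E₂ hE₁ hE₂ _ htail₁ htail₂ F hF
  set G := {ω | E₁ ω ∈ Icc (1 / 32 : ℝ) 4 ∧ E₂ ω ∈ Icc (1 / 32 : ℝ) 4}
  have hGc : P.real Gᶜ ≤ 1 / 8 := by
    have hcompl : Gᶜ = {ω | E₁ ω ∉ Icc (1 / 32 : ℝ) 4} ∪ {ω | E₂ ω ∉ Icc (1 / 32 : ℝ) 4} := by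
      ext ω; simp only [G, mem_compl_iff, mem_ofPred_eq, mem_union, not_and_or]
    have h₁ := measureReal_not_mem_Icc_le_of_exp_tail hE₁ htail₁
      (ε := 1 / 32) (M := 4) (by norm_num) (by norm_num)
    have h₂ := measureReal_not_mem_Icc_le_of_exp_tail hE₂ htail₂
      (ε := 1 / 32) (M := 4) (by norm_num) (by norm_num)
    rw [hcompl]
    linarith [measureReal_union_le (μ := P) {ω | E₁ ω ∉ Icc (1 / 32 : ℝ) 4}
      {ω | E₂ ω ∉ Icc (1 / 32 : ℝ) 4}, exp_neg_four_lt]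
  have hGm : MeasurableSet G :=
    (measurableSet_Icc.preimage hE₁).inter (measurableSet_Icc.preimage hE₂)
  rw [← measureReal_def]
  calc (7 : ℝ) / 8 ≤ P.real G := by rw [probReal_compl_eq_one_sub hGm] at hGc; linarith
    _ ≤ _ := measureReal_mono fun ω ⟨hx, hy⟩ =>
      rpowGapConst_bounds_of_mem_Icc hq.le (by norm_num) hx hy hF.le
end
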